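/- Let Π be a set of permutation patterns with k = max_{π∈Π}|π|, and let τ ∈ S_n. Then P_i(τ) = P_{i+1}(τ) + P_i(τ↓_{i+1}) if i < n and i ≤ k; P_i(τ) = 1 if i = n and τ ∈ Π; and P_i(τ) = 0 in all other cases (in particular whenever i > k or i > n, and when i = n with τ ∉ Π). -/

import Mathlib

/-- `w` is a permutation of `{1,…,n}`, viewed as a word containing each of `1,…,n` exactly once. -/
def IsPermWord (n : ℕ) (w : List ℕ) : Prop := w.Perm (List.range' 1 n)

/-- The standardization of a word `w` of distinct letters: each letter is replaced by its rank. -/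
def stdize (w : List ℕ) : List ℕ := w.map fun x => (w.filter fun y => decide (y ≤ x)).length

/-- `τ` avoids the set of patterns `P`: no nonempty subsequence of `τ` standardizes to a pattern. -/
def AvoidsSet (P : Set (List ℕ)) (τ : List ℕ) : Prop :=
  ∀ u : List ℕ, u.Sublist τ → u ≠ [] → stdize u ∉ P
/-- `τ↓_i` for `τ ∈ S_n`: delete the `i`-th largest letter `n - i + 1` and standardize. -/
def delOp (n i : ℕ) (τ : List ℕ) : List ℕ := stdize (τ.erase (n - i + 1))

/-- The set of `P`-hits in `τ ∈ S_n` containing the entire `i`-upfix of `τ`,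
i.e. containing all the letters `n - i + 1, …, n` (empty when `i > n`, since there
is then no `i`-upfix). -/
def hitsUsingUpfix (P : Set (List ℕ)) (n i : ℕ) (τ : List ℕ) : Set (List ℕ) :=
  {u | u.Sublist τ ∧ stdize u ∈ P ∧ i ≤ n ∧ ∀ j, n - i + 1 ≤ j → j ≤ n → j ∈ u}

/-- `P_i(τ)`: the number of `P`-hits in `τ ∈ S_n` containing the entire `i`-upfix of `τ`. -/
noncomputable def Pcount (P : Set (List ℕ)) (n i : ℕ) (τ : List ℕ) : ℕ :=
  (hitsUsingUpfix P n i τ).ncard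

/-
Split the `P`-hits containing the `i`-upfix according to whether they also contain the next
letter `m = n - i`. Those that do are exactly the hits containing the `(i+1)`-upfix. Those that
do not are sublists of `τ.erase m`; closing the gap at `m` (the map `collapse m`) preserves
their standardization, is injective, and carries them bijectively onto the hits of
`τ↓_{i+1}` containing its `i`-upfix. When `i = n` the only candidate hit is `τ` itself, and
when `i > k` a hit would need more than `k` letters.
-/

theorem List.injOn_map_of_injOn {α β : Type*} {f : α → β} {s : Set α} (hf : s.InjOn f) :
    {l : List α | ∀ x ∈ l, x ∈ s}.InjOn (List.map f) := by
  intro l₁ h₁ l₂ h₂ h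
  induction l₁ generalizing l₂ with
  | nil => exact (List.map_eq_nil_iff.1 h.symm).symm
  | cons a l₁ ih =>
    cases l₂ with
    | nil => simp at h
    | cons b l₂ =>
      simp only [List.map_cons, List.cons.injEq] at h
      simp only [Set.mem_ofPred_eq, List.mem_cons, forall_eq_or_imp] at h₁ h₂
      rw [hf h₁.1 h₂.1 h.1, ih h₁.2 h₂.2 h.2]

lemma length_le_of_range'_subset {u : List ℕ} {s i : ℕ}
    (h : ∀ j, s ≤ j → j < s + i → j ∈ u) : i ≤ u.length := by
  simpa using (List.subperm_of_subset (List.nodup_range' (s := s) (n := i))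
    fun j hj => h j (List.mem_range'_1.1 hj).1 (List.mem_range'_1.1 hj).2).length_le

lemma filter_le_range'_one {n x : ℕ} (hx : x ≤ n) :
    (List.range' 1 n).filter (fun y => decide (y ≤ x)) = List.range' 1 x := by
  obtain ⟨d, rfl⟩ := Nat.exists_eq_add_of_le hx
  rw [← List.range'_append_1, List.filter_append,
    List.filter_eq_self.2 fun a ha => decide_eq_true (by grind),
    List.filter_eq_nil_iff.2 fun a ha => by grind,
    List.append_nil]

lemma stdize_map_of_le_iff (f : ℕ → ℕ) (u : List ℕ)
    (h : ∀ a ∈ u, ∀ b ∈ u, f b ≤ f a ↔ b ≤ a) : stdize (u.map f) = stdize u := by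
  simp only [stdize, List.map_map, List.filter_map, List.length_map]
  refine List.map_congr_left fun x hx => ?_
  simp only [Function.comp_apply]
  congr 1
  exact List.filter_congr fun y hy => by simp only [Function.comp_apply, h x hx y hy]

namespace IsPermWord

variable {n : ℕ} {τ : List ℕ}

lemma nodup (hτ : IsPermWord n τ) : τ.Nodup :=
  hτ.nodup_iff.2 List.nodup_range'

lemma length_eq (hτ : IsPermWord n τ) : τ.length = n := by
  rw [List.Perm.length_eq hτ, List.length_range']

lemma mem_iff (hτ : IsPermWord n τ) {x : ℕ} : x ∈ τ ↔ 1 ≤ x ∧ x ≤ n := by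
  rw [List.Perm.mem_iff hτ, List.mem_range'_1]
  omega

lemma rank_eq (hτ : IsPermWord n τ) {x : ℕ} (hx : x ≤ n) :
    (τ.filter fun y => decide (y ≤ x)).length = x := by
  rw [(List.Perm.filter _ hτ).length_eq, filter_le_range'_one hx, List.length_range']

lemma stdize_eq (hτ : IsPermWord n τ) : stdize τ = τ := by
  conv_rhs => rw [← List.map_id τ]
  exact List.map_congr_left fun x hx => hτ.rank_eq (hτ.mem_iff.1 hx).2

lemma eq_of_sublist (hτ : IsPermWord n τ) {u : List ℕ} (hu : u.Sublist τ)
    (h : ∀ j, 1 ≤ j → j ≤ n → j ∈ u) : u = τ :=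
  hu.eq_of_length_le <| hτ.length_eq ▸
    length_le_of_range'_subset fun j hj1 hj2 => h j hj1 (by omega)

end IsPermWord

def collapse (m x : ℕ) : ℕ := if x < m then x else x - 1

lemma collapse_le_collapse_iff {m a b : ℕ} (ha : a ≠ m) (hb : b ≠ m) :
    collapse m b ≤ collapse m a ↔ b ≤ a := by
  unfold collapse; split_ifs <;> omega

lemma injOn_collapse (m : ℕ) : {x | x ≠ m}.InjOn (collapse m) := by
  rintro a (ha : a ≠ m) b (hb : b ≠ m) h
  simp only [collapse] at h
  split_ifs at h <;> omega

lemma mem_map_collapse_iff {m j : ℕ} {u : List ℕ} (hu : m ∉ u) (hj : m ≤ j) :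
    j ∈ u.map (collapse m) ↔ j + 1 ∈ u := by
  constructor
  · intro h
    obtain ⟨x, hx, rfl⟩ := List.mem_map.1 h
    have hxm : x ≠ m := fun h => hu (h ▸ hx)
    unfold collapse at hj ⊢
    split_ifs at hj ⊢
    · omega
    · rwa [Nat.sub_add_cancel (by omega)]
  · exact fun h => List.mem_map.2 ⟨j + 1, h, by rw [collapse, if_neg (by omega), Nat.add_sub_cancel]⟩

lemma stdize_map_collapse {m : ℕ} {u : List ℕ} (hu : m ∉ u) :
    stdize (u.map (collapse m)) = stdize u :=
  stdize_map_of_le_iff _ u fun _ ha _ hb =>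
    collapse_le_collapse_iff (fun h => hu (h ▸ ha)) (fun h => hu (h ▸ hb))

lemma IsPermWord.stdize_erase {n m : ℕ} {τ : List ℕ} (hτ : IsPermWord n τ) (hm : m ∈ τ) :
    stdize (τ.erase m) = (τ.erase m).map (collapse m) := by
  refine List.map_congr_left fun x hx => ?_
  obtain ⟨hxm, hxτ⟩ := hτ.nodup.mem_erase_iff.1 hx
  rw [← List.erase_filter, List.length_erase, hτ.rank_eq (hτ.mem_iff.1 hxτ).2]
  simp only [List.mem_filter, hm, true_and, decide_eq_true_eq, collapse]
  split_ifs <;> omega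

lemma IsPermWord.delOp_eq {n i : ℕ} {τ : List ℕ} (hτ : IsPermWord n τ) (hin : i < n) :
    delOp n (i + 1) τ = (τ.erase (n - i)).map (collapse (n - i)) := by
  rw [delOp, show n - (i + 1) + 1 = n - i by omega, hτ.stdize_erase (hτ.mem_iff.2 (by omega))]

section Hits

variable {P : Set (List ℕ)} {n i : ℕ} {τ : List ℕ}

lemma hitsUsingUpfix_finite : (hitsUsingUpfix P n i τ).Finite :=
  (Set.finite_mem_finset τ.sublists.toFinset).subset fun _ hu => by simpa using hu.1

lemma hitsUsingUpfix_succ (hin : i < n) :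
    hitsUsingUpfix P n (i + 1) τ = hitsUsingUpfix P n i τ ∩ {u | n - i ∈ u} := by
  ext u
  simp only [hitsUsingUpfix, Set.mem_inter_iff, Set.mem_ofPred_eq]
  constructor
  · rintro ⟨hs, hp, -, hup⟩
    exact ⟨⟨hs, hp, hin.le, fun j hj1 hj2 => hup j (by omega) hj2⟩, hup _ (by omega) (by omega)⟩
  · rintro ⟨⟨hs, hp, -, hup⟩, hm⟩
    refine ⟨hs, hp, hin, fun j hj1 hj2 => ?_⟩
    obtain rfl | hj := (show n - i ≤ j by omega).eq_or_lt
    · exact hm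
    · exact hup j (by omega) hj2

lemma IsPermWord.image_hitsUsingUpfix_sdiff (hτ : IsPermWord n τ) (hin : i < n) :
    List.map (collapse (n - i)) '' (hitsUsingUpfix P n i τ \ {u | n - i ∈ u}) =
      hitsUsingUpfix P (n - 1) i (delOp n (i + 1) τ) := by
  ext v
  simp only [hitsUsingUpfix, hτ.delOp_eq hin, Set.mem_image, Set.mem_sdiff, Set.mem_ofPred_eq]
  constructor
  · rintro ⟨u, ⟨⟨hs, hp, -, hup⟩, hm⟩, rfl⟩
    refine ⟨(List.erase_of_not_mem hm ▸ hs.erase (n - i)).map _,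
      (stdize_map_collapse hm).symm ▸ hp, by omega, fun j hj1 hj2 => ?_⟩
    exact (mem_map_collapse_iff hm (by omega)).2 (hup _ (by omega) (by omega))
  · rintro ⟨hs, hp, -, hup⟩
    obtain ⟨u, hu, rfl⟩ := List.sublist_map_iff.1 hs
    have hm : n - i ∉ u := fun h => (hτ.nodup.mem_erase_iff.1 (hu.subset h)).1 rfl
    refine ⟨u, ⟨⟨hu.trans List.erase_sublist, stdize_map_collapse hm ▸ hp, hin.le,
      fun j hj1 hj2 => ?_⟩, hm⟩, rfl⟩
    have := (mem_map_collapse_iff hm (by omega)).1 (hup (j - 1) (by omega) (by omega))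
    rwa [Nat.sub_add_cancel (by omega)] at this

lemma injOn_map_collapse (m : ℕ) : {u : List ℕ | m ∉ u}.InjOn (List.map (collapse m)) :=
  fun _ h₁ _ h₂ => List.injOn_map_of_injOn (injOn_collapse m)
    (fun _ hx => ne_of_mem_of_not_mem hx h₁) (fun _ hx => ne_of_mem_of_not_mem hx h₂)

lemma IsPermWord.Pcount_eq_Pcount_succ_add (hτ : IsPermWord n τ) (hin : i < n) :
    Pcount P n i τ = Pcount P n (i + 1) τ + Pcount P (n - 1) i (delOp n (i + 1) τ) := by
  rw [Pcount, Pcount, Pcount, hitsUsingUpfix_succ hin, ← hτ.image_hitsUsingUpfix_sdiff hin,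
    ((injOn_map_collapse _).mono fun _ hu => hu.2).ncard_image,
    Set.ncard_inter_add_ncard_sdiff_eq_ncard _ _ hitsUsingUpfix_finite]

lemma IsPermWord.hitsUsingUpfix_self (hτ : IsPermWord n τ) :
    hitsUsingUpfix P n n τ = {τ} ∩ P := by
  ext u
  simp only [hitsUsingUpfix, Set.mem_inter_iff, Set.mem_singleton_iff, Set.mem_ofPred_eq]
  constructor
  · rintro ⟨hs, hp, -, hup⟩
    obtain rfl := hτ.eq_of_sublist hs fun j hj1 hj2 => hup j (by omega) hj2
    exact ⟨rfl, by rwa [hτ.stdize_eq] at hp⟩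
  · rintro ⟨rfl, hp⟩
    exact ⟨List.Sublist.refl u, by rwa [hτ.stdize_eq], le_rfl,
      fun j hj1 hj2 => hτ.mem_iff.2 ⟨by omega, hj2⟩⟩

lemma Pcount_eq_zero_of_length_le {k : ℕ} (hP : ∀ π ∈ P, π.length ≤ k)
    (hki : k < i) : Pcount P n i τ = 0 := by
  rw [Pcount, Set.ncard_eq_zero hitsUsingUpfix_finite, Set.eq_empty_iff_forall_notMem]
  rintro u ⟨-, hp, hin, hup⟩
  have := length_le_of_range'_subset (s := n - i + 1) (i := i) fun j hj1 hj2 => hup j hj1 (by omega)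
  have := hP _ hp
  rw [stdize, List.length_map] at this
  omega

lemma Pcount_eq_zero_of_lt (hni : n < i) : Pcount P n i τ = 0 := by
  rw [Pcount, Set.ncard_eq_zero hitsUsingUpfix_finite, Set.eq_empty_iff_forall_notMem]
  exact fun u hu => absurd hu.2.2.1 (by omega)

end Hits

theorem statement4_general (P : Set (List ℕ)) (k : ℕ)
    (hP : ∀ π ∈ P, IsPermWord π.length π ∧ 1 ≤ π.length ∧ π.length ≤ k)
    (n : ℕ) (τ : List ℕ) (hτ : IsPermWord n τ) (i : ℕ) :
    (i < n → i ≤ k →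
      Pcount P n i τ = Pcount P n (i + 1) τ + Pcount P (n - 1) i (delOp n (i + 1) τ)) ∧
    (i = n → τ ∈ P → Pcount P n i τ = 1) ∧
    (¬(i < n ∧ i ≤ k) → ¬(i = n ∧ τ ∈ P) → Pcount P n i τ = 0) := by
  refine ⟨fun hin _ => hτ.Pcount_eq_Pcount_succ_add hin, ?_, fun hrec hself => ?_⟩
  · rintro rfl hτP
    rw [Pcount, hτ.hitsUsingUpfix_self, Set.singleton_inter_of_mem hτP, Set.ncard_singleton]
  · rcases lt_trichotomy i n with hin | rfl | hni
    · exact Pcount_eq_zero_of_length_le (fun π hπ => (hP π hπ).2.2) (by omega)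
    · rw [Pcount, hτ.hitsUsingUpfix_self,
        Set.singleton_inter_eq_empty.2 fun hτP => hself ⟨rfl, hτP⟩, Set.ncard_empty]
    · exact Pcount_eq_zero_of_lt hni

/-- Proposition on the recurrence for `P_i`. -/
theorem statement4 (P : Set (List ℕ)) (k : ℕ)
    (hP : ∀ π ∈ P, IsPermWord π.length π ∧ 1 ≤ π.length ∧ π.length ≤ k)
    (hk : ∃ π ∈ P, π.length = k)
    (n : ℕ) (τ : List ℕ) (hτ : IsPermWord n τ) (i : ℕ) :
    (i < n → i ≤ k →
      Pcount P n i τ = Pcount P n (i + 1) τ + Pcount P (n - 1) i (delOp n (i + 1) τ)) ∧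
    (i = n → τ ∈ P → Pcount P n i τ = 1) ∧
    (¬(i < n ∧ i ≤ k) → ¬(i = n ∧ τ ∈ P) → Pcount P n i τ = 0) :=
  statement4_general P k hP n τ hτ i
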